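/- Response authentication: for all terms a, b, req, resp, k and logs L, if L is Good, KeyAB a b k L, and Level Low (Hmac k (Pair tagResponse (Pair req resp))) L, then Logged (Response a b req resp) L, or Logged (Bad a) L, or Logged (Bad b) L. -/

import Mathlib

abbrev byte := Nat

inductive term : Type
  | Literal (bs : List byte)
  | Pair (t1 t2 : term)
  | Hmac (k m : term)
  | SEnc (k p : term)

open term

inductive nonceUsage : Type

inductive hmacKeyUsage : Type
  | U_KeyAB (a b : term)

inductive sencKeyUsage : Type

inductive usage : Type
  | AttackerGuess
  | Nonce (nu : nonceUsage)
  | HmacKey (hu : hmacKeyUsage)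
  | SEncKey (su : sencKeyUsage)

inductive event : Type
  | New (t : term) (u : usage)
  | Request (a b req : term)
  | Response (a b req resp : term)
  | Bad (p : term)

abbrev log := Set event

def Logged (e : event) (L : log) : Prop := e ∈ L

def tagRequest : term := Literal [49]
def tagResponse : term := Literal [50]

def Requested (m req : term) : Prop := m = Pair tagRequest req
def Responded (m req resp : term) : Prop := m = Pair tagResponse (Pair req resp)

def KeyAB (a b k : term) (L : log) : Prop :=
  Logged (event.New k (usage.HmacKey (hmacKeyUsage.U_KeyAB a b))) L

def KeyABPayload (a b m : term) (L : log) : Prop :=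
  (∃ req, Requested m req ∧ Logged (event.Request a b req) L) ∨
  (∃ req resp, Responded m req resp ∧ Logged (event.Response a b req resp) L)

def canHmac (k m : term) (L : log) : Prop :=
  ∃ a b, KeyAB a b k L ∧ KeyABPayload a b m L

def KeyABComp (a b : term) (L : log) : Prop :=
  Logged (event.Bad a) L ∨ Logged (event.Bad b) L

def hmacComp (k : term) (L : log) : Prop :=
  ∃ a b, KeyAB a b k L ∧ KeyABComp a b L

def nonceComp (_t : term) (_L : log) : Prop := False
def sencComp (_t : term) (_L : log) : Prop := False
def canSEnc (_k _p : term) (_L : log) : Prop := False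

inductive level : Type | Low | High

inductive Level : level → term → log → Prop
  | Level_AttackerGuess {l : level} {bs : List byte} {L : log} :
      Logged (event.New (Literal bs) usage.AttackerGuess) L →
      Level l (Literal bs) L
  | Level_Nonce {l : level} {bs : List byte} {L : log} (nu : nonceUsage) :
      Logged (event.New (Literal bs) (usage.Nonce nu)) L →
      (l = level.Low → nonceComp (Literal bs) L) →
      Level l (Literal bs) L
  | Level_HMacKey {l : level} {bs : List byte} {L : log} (hu : hmacKeyUsage) :
      Logged (event.New (Literal bs) (usage.HmacKey hu)) L →
      (l = level.Low → hmacComp (Literal bs) L) →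
      Level l (Literal bs) L
  | Level_SEncKey {l : level} {bs : List byte} {L : log} (su : sencKeyUsage) :
      Logged (event.New (Literal bs) (usage.SEncKey su)) L →
      (l = level.Low → sencComp (Literal bs) L) →
      Level l (Literal bs) L
  | Level_Pair {l : level} {t1 t2 : term} {L : log} :
      Level l t1 L → Level l t2 L → Level l (Pair t1 t2) L
  | Level_Hmac {l : level} {k m : term} {L : log} :
      canHmac k m L → Level l m L → Level l (Hmac k m) L
  | Level_Hmac_Low {l : level} {k m : term} {L : log} :
      Level level.Low k L → Level level.Low m L → Level l (Hmac k m) L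
  | Level_SEnc {l l' : level} {k p : term} {L : log} :
      canSEnc k p L → Level l' p L → Level l (SEnc k p) L
  | Level_SEnc_Low {l : level} {k p : term} {L : log} :
      Level level.Low k L → Level level.Low p L → Level l (SEnc k p) L

def log_leq (L L' : log) : Prop := ∀ x, Logged x L → Logged x L'

def Good (L : log) : Prop :=
  (∀ t u, Logged (event.New t u) L → ∃ bs, t = Literal bs) ∧
  (∀ t u1 u2, Logged (event.New t u1) L → Logged (event.New t u2) L → u1 = u2)

/-!
An HMAC can be public for two reasons. Either its payload was MACed legitimately (`canHmac`):
a good log registers each key with one usage, so the key's owners are `a` and `b`, and the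
distinct tags force the `Response` branch of `KeyABPayload`. Or the key itself is public, which
for a registered key in a good log means one of its owners is compromised.
-/

theorem Good.eq_literal_of_logged_new {L : log} (hG : Good L) {t : term} {u : usage}
    (h : Logged (event.New t u) L) : ∃ bs, t = Literal bs :=
  hG.1 t u h

theorem Good.usage_unique {L : log} (hG : Good L) {t : term} {u₁ u₂ : usage}
    (h₁ : Logged (event.New t u₁) L) (h₂ : Logged (event.New t u₂) L) : u₁ = u₂ :=
  hG.2 t u₁ u₂ h₁ h₂

theorem Good.keyAB_unique {L : log} (hG : Good L) {a b a' b' k : term}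
    (h : KeyAB a b k L) (h' : KeyAB a' b' k L) : a' = a ∧ b' = b := by
  have huse := hG.usage_unique h' h
  simp only [usage.HmacKey.injEq, hmacKeyUsage.U_KeyAB.injEq] at huse
  exact huse

theorem tagRequest_ne_tagResponse : tagRequest ≠ tagResponse := by
  simp [tagRequest, tagResponse]

theorem KeyABPayload.logged_response {a b req resp : term} {L : log}
    (h : KeyABPayload a b (Pair tagResponse (Pair req resp)) L) :
    Logged (event.Response a b req resp) L := by
  rcases h with ⟨req', hreq, -⟩ | ⟨req', resp', hresp, hlog⟩
  · simp only [Requested, Pair.injEq] at hreq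
    exact absurd hreq.1.symm tagRequest_ne_tagResponse
  · simp only [Responded, Pair.injEq, true_and] at hresp
    obtain ⟨rfl, rfl⟩ := hresp
    exact hlog

theorem Good.keyABPayload_of_canHmac {L : log} (hG : Good L) {a b k m : term}
    (hK : KeyAB a b k L) (h : canHmac k m L) : KeyABPayload a b m L := by
  obtain ⟨a', b', hK', hP⟩ := h
  obtain ⟨rfl, rfl⟩ := hG.keyAB_unique hK hK'
  exact hP

theorem Good.keyABComp_of_level_low {L : log} (hG : Good L) {a b k : term}
    (hK : KeyAB a b k L) (hk : Level level.Low k L) : KeyABComp a b L := by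
  obtain ⟨bs, rfl⟩ := hG.eq_literal_of_logged_new hK
  cases hk with
  | Level_AttackerGuess h => cases hG.usage_unique hK h
  | Level_Nonce _ h _ => cases hG.usage_unique hK h
  | Level_SEncKey _ h _ => cases hG.usage_unique hK h
  | Level_HMacKey _ _ hcomp =>
    obtain ⟨a', b', hK', hC⟩ := hcomp rfl
    obtain ⟨rfl, rfl⟩ := hG.keyAB_unique hK hK'
    exact hC

theorem Level.canHmac_or_low_of_hmac {l : level} {k m : term} {L : log}
    (h : Level l (Hmac k m) L) : canHmac k m L ∨ Level level.Low k L := by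
  cases h with
  | Level_Hmac hcan _ => exact Or.inl hcan
  | Level_Hmac_Low hk _ => exact Or.inr hk

theorem AuthenticationResponse : ∀ (a b req resp k : term) (L : log),
    Good L → KeyAB a b k L →
    Level level.Low (term.Hmac k (term.Pair tagResponse (term.Pair req resp))) L →
    Logged (event.Response a b req resp) L ∨
    Logged (event.Bad a) L ∨ Logged (event.Bad b) L := by
  intro a b req resp k L hG hK hL
  rcases hL.canHmac_or_low_of_hmac with hcan | hk
  · exact Or.inl (hG.keyABPayload_of_canHmac hK hcan).logged_response
  · exact Or.inr (hG.keyABComp_of_level_low hK hk)
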